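/- arXiv:1308.0173 — 3 statements merged into one kernel-verified Lean document; each statement's English description precedes it below -/
import Mathlib

section
/- Let L be a finite set of links with nonnegative affectances a_w(v) for w ≠ v (and a_v(v)=0), such that L is feasible, i.e. ∑_{w∈L} a_w(v) ≤ 1 for every v ∈ L. Then there exists a subset L' ⊆ L with |L'| ≥ |L|/2 such that for every u ∈ L', ∑_{v∈L'} a_u(v) ≤ 2 (i.e., L' is amenable with constant 2). -/
/-- Every feasible set contains an amenable subset of at least half the size. -/
theorem feasible_has_amenable_half {ι : Type*} [DecidableEq ι] (L : Finset ι)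
    (a : ι → ι → ℝ)
    (ha0 : ∀ w v, 0 ≤ a w v)
    (haself : ∀ v, a v v = 0)
    (hfeas : ∀ v ∈ L, ∑ w ∈ L, a w v ≤ 1) :
    ∃ L' ⊆ L, (L.card : ℝ) ≤ 2 * L'.card ∧ ∀ u ∈ L', ∑ v ∈ L', a u v ≤ 2 := by
  classical
  set P : ι → Prop := fun u => ∑ v ∈ L, a u v ≤ 2 with hP
  refine ⟨L.filter P, Finset.filter_subset _ _, ?_, ?_⟩
  · -- cardinality bound
    have htot : ∑ u ∈ L, ∑ v ∈ L, a u v ≤ (L.card : ℝ) := by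
      rw [Finset.sum_comm]
      calc ∑ v ∈ L, ∑ u ∈ L, a u v ≤ ∑ v ∈ L, (1 : ℝ) :=
            Finset.sum_le_sum fun v hv => hfeas v hv
        _ = (L.card : ℝ) := by simp
    have hR : (2 : ℝ) * (L.filter fun u => ¬ P u).card ≤ ∑ u ∈ L, ∑ v ∈ L, a u v := by
      have h1 : (2 : ℝ) * (L.filter fun u => ¬ P u).card
          ≤ ∑ u ∈ L.filter (fun u => ¬ P u), ∑ v ∈ L, a u v := by
        rw [mul_comm]
        calc ((L.filter fun u => ¬ P u).card : ℝ) * 2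
            = ∑ _u ∈ L.filter (fun u => ¬ P u), (2 : ℝ) := by
              rw [Finset.sum_const]; push_cast; ring
          _ ≤ ∑ u ∈ L.filter (fun u => ¬ P u), ∑ v ∈ L, a u v := by
              refine Finset.sum_le_sum fun u hu => ?_
              have := (Finset.mem_filter.mp hu).2
              simp only [hP, not_le] at this
              exact this.le
      refine h1.trans ?_
      refine Finset.sum_le_sum_of_subset_of_nonneg (Finset.filter_subset _ _) ?_
      intro u _ _
      exact Finset.sum_nonneg fun v _ => ha0 u v
    have hsplit : (L.filter P).card + (L.filter fun u => ¬ P u).card = L.card :=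
      Finset.card_filter_add_card_filter_not (p := P)
    have : ((L.filter P).card : ℝ) + ((L.filter fun u => ¬ P u).card : ℝ) = (L.card : ℝ) := by
      exact_mod_cast congrArg (Nat.cast (R := ℝ)) hsplit
    linarith [hR.trans htot]
  · -- amenability
    intro u hu
    have hu2 : ∑ v ∈ L, a u v ≤ 2 := (Finset.mem_filter.mp hu).2
    refine le_trans ?_ hu2
    exact Finset.sum_le_sum_of_subset_of_nonneg (Finset.filter_subset _ _)
      fun v _ _ => ha0 u v
end

section
/- Suppose every pure strategy profile in which a fixed set S of players transmits and all others are silent yields success for exactly the players in a set W(S). If a history has the property that every player in some set G succeeds whenever it transmits and some event E (of empirical frequency ≥ 1 − δ) holds, and every player in G has regret at most ε with ε + 2δ < 1, then every player in G transmits in at least a 1 − (ε + 2δ) fraction of rounds. -/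
/-- If every player in G would succeed whenever the event E holds (E having empirical
frequency at least 1 − δ), and every player in G has regret at most ε against the
always-transmit strategy, then every player in G transmits in at least a 1 − (ε + 2δ)
fraction of rounds. -/
theorem good_players_transmit_often {ι : Type*} (G : Finset ι)
    (T : ℕ) (hT : 0 < T)
    (ε δ : ℝ) (hε : 0 ≤ ε) (hδ : 0 ≤ δ) (hsmall : ε + 2 * δ < 1)
    (E : Fin T → Bool)
    (transmit : ι → Fin T → Bool)
    -- `succ g t` : player g would succeed in round t if it transmitted
    (succ : ι → Fin T → Bool)
    (hE : (1 - δ) * T ≤ ((Finset.univ.filter fun t => E t = true).card : ℝ))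
    (hsucc : ∀ g ∈ G, ∀ t : Fin T, E t = true → succ g t = true)
    -- realized utility: +1 successful transmission, −1 failed transmission, 0 silence
    (u : ι → Fin T → ℝ)
    (hu : ∀ g t, u g t =
      if transmit g t = true then (if succ g t = true then 1 else -1) else 0)
    -- regret at most ε against the always-transmit fixed strategy
    (hregret : ∀ g ∈ G,
      (∑ t, (if succ g t = true then (1 : ℝ) else -1)) / T
        - (∑ t, u g t) / T ≤ ε) :
    ∀ g ∈ G,
      (1 - (ε + 2 * δ)) * T ≤
        ((Finset.univ.filter fun t => transmit g t = true).card : ℝ) := by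
  intro g hg
  have hTpos : (0 : ℝ) < T := by exact_mod_cast hT
  set A := Finset.univ.filter fun t => succ g t = true with hA
  set B := Finset.univ.filter fun t => transmit g t = true with hB
  -- E ⊆ A
  have hEA : (Finset.univ.filter fun t => E t = true) ⊆ A := by
    intro t ht
    rw [hA]
    simp only [Finset.mem_filter, Finset.mem_univ, true_and] at ht ⊢
    exact hsucc g hg t ht
  have hAcard : (1 - δ) * T ≤ (A.card : ℝ) := by
    refine hE.trans ?_
    exact_mod_cast Finset.card_le_card hEA
  -- benchmark sum = 2 * #A - T
  have hS1 : (∑ t, (if succ g t = true then (1 : ℝ) else -1))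
      = 2 * (A.card : ℝ) - T := by
    have : ∀ t : Fin T, (if succ g t = true then (1 : ℝ) else -1)
        = 2 * (if succ g t = true then (1 : ℝ) else 0) - 1 := by
      intro t; by_cases h : succ g t = true <;> simp [h] <;> norm_num
    rw [Finset.sum_congr rfl fun t _ => this t, Finset.sum_sub_distrib,
      ← Finset.mul_sum, Finset.sum_boole]
    simp [hA, Finset.card_univ]
  -- realized sum ≤ #B
  have hS2 : (∑ t, u g t) ≤ (B.card : ℝ) := by
    have : (∑ t, u g t) ≤ ∑ t, (if transmit g t = true then (1 : ℝ) else 0) := by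
      refine Finset.sum_le_sum fun t _ => ?_
      rw [hu]
      split_ifs <;> norm_num
    refine this.trans_eq ?_
    rw [Finset.sum_boole]
  -- regret inequality
  have hr := hregret g hg
  rw [div_sub_div_same, div_le_iff₀ hTpos] at hr
  have key : (1 - (ε + 2 * δ)) * T ≤ (∑ t, u g t) := by
    have := hS1 ▸ hr
    nlinarith [hAcard]
  exact key.trans hS2
end

section
/- Let q : L → [0,1] and let A ⊆ L be a finite set with |A ∩ B| < |A|/2 where B = {i ∈ L : q_i ≥ 1/2}. If additionally every j in an ('amenable') subset Â ⊆ A∖B with |Â| ≥ |A∖B|/2 satisfies ∑_{i∈L} q_i·a_i(j) ≥ 1/8, and every i ∈ L satisfies ∑_{j∈Â} a_i(j) ≤ c' for nonnegative a_i(j), then |A| ≤ 32c'·∑_{i∈L} q_i. Conversely, if |A ∩ B| ≥ |A|/2 then |A| ≤ 4∑_{i∈L} q_i. In either case, |A| ≤ max{4, 32c'}·∑_{i∈L} q_i. -/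
/-- Full case analysis of the upper-bound proofs: either the frequently-transmitting links
cover half of the feasible set A, or the amenable subset Â gives a double-counting bound.
In either case |A| = O(∑ q). -/
theorem case_analysis_bound {ι : Type*} [DecidableEq ι]
    (L A B Ahat : Finset ι) (q : ι → ℝ) (a : ι → ι → ℝ) (c' : ℝ)
    (hA : A ⊆ L)
    (hq0 : ∀ i, 0 ≤ q i) (hq1 : ∀ i, q i ≤ 1)
    (hB : ∀ i, i ∈ B ↔ i ∈ L ∧ 1 / 2 ≤ q i)
    (ha0 : ∀ i j, 0 ≤ a i j) (hc' : 0 ≤ c')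
    (hAhat : Ahat ⊆ A \ B)
    (hAhatcard : ((A \ B).card : ℝ) ≤ 2 * Ahat.card)
    (hlow : ∀ j ∈ Ahat, (1 : ℝ) / 8 ≤ ∑ i ∈ L, q i * a i j)
    (hup : ∀ i ∈ L, ∑ j ∈ Ahat, a i j ≤ c') :
    (((A ∩ B).card : ℝ) < (A.card : ℝ) / 2 →
        (A.card : ℝ) ≤ 32 * c' * ∑ i ∈ L, q i) ∧
    (((A ∩ B).card : ℝ) ≥ (A.card : ℝ) / 2 →
        (A.card : ℝ) ≤ 4 * ∑ i ∈ L, q i) ∧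
    (A.card : ℝ) ≤ max 4 (32 * c') * ∑ i ∈ L, q i := by
  have hqsum0 : (0:ℝ) ≤ ∑ i ∈ L, q i := Finset.sum_nonneg fun i _ => hq0 i
  -- Case 1
  have case1 : ((A ∩ B).card : ℝ) < (A.card : ℝ) / 2 →
      (A.card : ℝ) ≤ 32 * c' * ∑ i ∈ L, q i := by
    intro h
    -- double counting: |Â|/8 ≤ c' ∑ q
    have key : (Ahat.card : ℝ) * (1/8) ≤ c' * ∑ i ∈ L, q i := by
      calc (Ahat.card : ℝ) * (1/8) = ∑ _j ∈ Ahat, (1:ℝ)/8 := by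
            rw [Finset.sum_const, nsmul_eq_mul]
        _ ≤ ∑ j ∈ Ahat, ∑ i ∈ L, q i * a i j := Finset.sum_le_sum hlow
        _ = ∑ i ∈ L, ∑ j ∈ Ahat, q i * a i j := Finset.sum_comm
        _ = ∑ i ∈ L, q i * ∑ j ∈ Ahat, a i j := by
            simp [Finset.mul_sum]
        _ ≤ ∑ i ∈ L, q i * c' := by
            refine Finset.sum_le_sum fun i hi => ?_
            exact mul_le_mul_of_nonneg_left (hup i hi) (hq0 i)
        _ = c' * ∑ i ∈ L, q i := by rw [← Finset.sum_mul, mul_comm]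
    -- |A\B| = |A| - |A∩B| > |A|/2
    have hsplit : ((A \ B).card : ℝ) = (A.card : ℝ) - ((A ∩ B).card : ℝ) := by
      have := Finset.card_sdiff_add_card_inter A B
      have : ((A \ B).card : ℝ) + ((A ∩ B).card : ℝ) = (A.card : ℝ) := by
        exact_mod_cast congrArg Nat.cast this
      linarith
    have h1 : (A.card : ℝ) / 2 < ((A \ B).card : ℝ) := by linarith
    have h2 : (A.card : ℝ) ≤ 4 * (Ahat.card : ℝ) := by linarith
    linarith
  have case2 : ((A ∩ B).card : ℝ) ≥ (A.card : ℝ) / 2 →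
      (A.card : ℝ) ≤ 4 * ∑ i ∈ L, q i := by
    intro h
    have hsub : A ∩ B ⊆ L := fun x hx => hA (Finset.mem_inter.mp hx).1
    have : ((A ∩ B).card : ℝ) * (1/2) ≤ ∑ i ∈ L, q i := by
      calc ((A ∩ B).card : ℝ) * (1/2) = ∑ _i ∈ A ∩ B, (1:ℝ)/2 := by
            rw [Finset.sum_const, nsmul_eq_mul]
        _ ≤ ∑ i ∈ A ∩ B, q i := by
            refine Finset.sum_le_sum fun i hi => ?_
            exact ((hB i).mp (Finset.mem_inter.mp hi).2).2
        _ ≤ ∑ i ∈ L, q i := Finset.sum_le_sum_of_subset_of_nonneg hsub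
            (fun i _ _ => hq0 i)
    linarith
  refine ⟨case1, case2, ?_⟩
  rcases lt_or_ge ((A ∩ B).card : ℝ) ((A.card : ℝ) / 2) with h | h
  · calc (A.card : ℝ) ≤ 32 * c' * ∑ i ∈ L, q i := case1 h
      _ ≤ max 4 (32 * c') * ∑ i ∈ L, q i :=
        mul_le_mul_of_nonneg_right (le_max_right _ _) hqsum0
  · calc (A.card : ℝ) ≤ 4 * ∑ i ∈ L, q i := case2 h
      _ ≤ max 4 (32 * c') * ∑ i ∈ L, q i :=
        mul_le_mul_of_nonneg_right (le_max_left _ _) hqsum0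
end
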